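/- arXiv:1407.5230 — 2 statements merged into one kernel-verified Lean document; each statement's English description precedes it below -/
import Mathlib

section
/- Let V be a d-dimensional vector space over a field k with basis v_1,…,v_d, and let W_1,…,W_r be subspaces of V each spanned by a subset of this basis. Define the 0-1 table a_{ij} by a_{ij}=1 iff v_i ∈ W_j, and set n = min over i of Σ_j a_{ij}. Then there exists a surjective k-linear map W_1 ⊕ ⋯ ⊕ W_r ↠ V^{⊕n}. -/
theorem stmt_0 {k : Type*} [Field k] {V : Type*} [AddCommGroup V] [Module k V]
    {d r : ℕ} (v : Module.Basis (Fin d) k V)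
    (S : Fin r → Set (Fin d)) (W : Fin r → Submodule k V)
    (hW : ∀ j, W j = Submodule.span k (⇑v '' S j))
    (a : Fin d → Fin r → ℕ)
    (ha1 : ∀ i j, a i j = 1 ↔ v i ∈ W j)
    (ha0 : ∀ i j, a i j = 0 ∨ a i j = 1)
    (n : ℕ) (hn : n = ⨅ i : Fin d, ∑ j, a i j) :
    ∃ f : (∀ j, W j) →ₗ[k] (Fin n → V), Function.Surjective f := by
  classical
  have key : ∀ i : Fin d, ∃ g : Fin n ↪ Fin r, ∀ m, v i ∈ W (g m) := by
    intro i
    have h1 : ∑ j, a i j = (Finset.univ.filter (fun j => v i ∈ W j)).card := by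
      rw [Finset.card_filter]
      refine Finset.sum_congr rfl fun j _ => ?_
      rcases ha0 i j with h | h
      · rw [h, if_neg fun hm => by have := (ha1 i j).mpr hm; omega]
      · rw [h, if_pos ((ha1 i j).mp h)]
    have h2 : n ≤ ∑ j, a i j := hn ▸ ciInf_le (OrderBot.bddBelow _) i
    have hcard : n ≤ Fintype.card {j : Fin r // v i ∈ W j} := by
      rw [Fintype.card_subtype]; omega
    obtain ⟨e⟩ := Function.Embedding.nonempty_of_card_le
      (by simpa using hcard : Fintype.card (Fin n) ≤ _)
    exact ⟨e.trans (Function.Embedding.subtype _), fun m => (e m).2⟩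
  choose g hg using key
  let F : (∀ j, W j) →ₗ[k] Fin n → V :=
    { toFun := fun x m => ∑ i, v.repr (x (g i m) : V) i • v i
      map_add' := by
        intro x y; funext m
        simp [Finset.sum_add_distrib, add_smul]
      map_smul' := by
        intro c x; funext m
        simp [Finset.smul_sum, smul_smul] }
  refine ⟨F, fun t => ?_⟩
  set c : Fin n → Fin d → k := fun m i => v.repr (t m) i with hc
  have hmem : ∀ j, (∑ m, ∑ i ∈ Finset.univ.filter (fun i => g i m = j), c m i • v i) ∈ W j := by
    intro j
    refine Submodule.sum_mem _ fun m _ => Submodule.sum_mem _ fun i hi => ?_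
    rw [Finset.mem_filter] at hi
    exact Submodule.smul_mem _ _ (hi.2 ▸ hg i m)
  set x : ∀ j, W j := fun j =>
    ⟨∑ m, ∑ i ∈ Finset.univ.filter (fun i => g i m = j), c m i • v i, hmem j⟩ with hxdef
  refine ⟨x, funext fun m => ?_⟩
  have hx : ∀ i : Fin d, v.repr (x (g i m) : V) i = c m i := by
    intro i
    simp only [hxdef, map_sum, map_smul, Finsupp.coe_finset_sum, Finset.sum_apply,
      Finsupp.smul_apply, Module.Basis.repr_self, Finsupp.single_apply, smul_eq_mul,
      mul_ite, mul_one, mul_zero]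
    rw [Finset.sum_eq_single m]
    · rw [Finset.sum_ite_eq' (Finset.univ.filter (fun i' => g i' m = g i m)) i (c m),
        if_pos (by simp)]
    · intro m' _ hm'
      rw [Finset.sum_ite_eq' (Finset.univ.filter (fun i' => g i' m' = g i m)) i (c m'),
        if_neg (by simp [hm'])]
    · simp
  have : F x m = ∑ i, c m i • v i := by
    simp only [F, LinearMap.coe_mk, AddHom.coe_mk]
    exact Finset.sum_congr rfl fun i _ => by rw [hx i]
  rw [this, hc]
  exact v.sum_repr (t m)
end

section
/- Let W_1,…,W_r be coordinate subspaces of V = k^d (each spanned by a subset of the standard basis) and let n be the minimal number of the W_j containing any fixed basis vector v_i. If φ: ⊕_j W_j → V^{⊕n} is given by the block matrix whose (α,j) block is the inclusion W_j ↪ V scaled by an indeterminate X_j^{(α)}, with the X_j^{(α)} algebraically independent over the prime field, then φ is surjective. -/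
open MvPolynomial in
lemma aux_det {k : Type*} [Field k] {r n : ℕ} (X : Fin r → Fin n → k)
    (hX : AlgebraicIndependent (⊥ : Subfield k) (fun p : Fin r × Fin n => X p.1 p.2))
    (f : Fin n ↪ Fin r) :
    (Matrix.of fun α β : Fin n => X (f β) α).det ≠ 0 := by
  set R := (⊥ : Subfield k)
  set g : Fin n × Fin n → Fin r × Fin n := fun p => (f p.2, p.1) with hg
  have hginj : Function.Injective g := by
    intro a b h
    simp only [hg, Prod.mk.injEq] at h
    exact Prod.ext h.2 (f.injective h.1)
  set N : Matrix (Fin n) (Fin n) (MvPolynomial (Fin r × Fin n) R) :=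
    (Matrix.mvPolynomialX (Fin n) (Fin n) R).map (rename g) with hN
  have h1 : N.det = rename g (Matrix.mvPolynomialX (Fin n) (Fin n) R).det := by
    rw [hN, ← AlgHom.mapMatrix_apply, ← AlgHom.map_det]
  have hNdet : N.det ≠ 0 := by
    rw [h1]
    exact fun h => Matrix.det_mvPolynomialX_ne_zero (Fin n) R
      ((rename_injective g hginj) (by simpa using h))
  intro hdet
  apply hNdet
  apply hX
  rw [map_zero]
  have : (aeval fun p : Fin r × Fin n => X p.1 p.2) N.det
      = (Matrix.of fun α β : Fin n => X (f β) α).det := by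
    rw [AlgHom.map_det]
    congr 1
    ext α β
    simp [hN, hg, aeval_rename, Function.comp]
  rw [this, hdet]

lemma aux_mem {k : Type*} [Field k] {d : ℕ} (T : Set (Fin d)) (i : Fin d) :
    (Pi.single i (1:k) : Fin d → k) ∈ Submodule.span k ((fun i => Pi.single i (1 : k)) '' T)
      ↔ i ∈ T := by
  constructor
  · intro h
    by_contra hi
    have hker : Submodule.span k ((fun i => Pi.single i (1:k)) '' T)
        ≤ LinearMap.ker (LinearMap.proj (R := k) (φ := fun _ : Fin d => k) i) := by
      rw [Submodule.span_le]
      rintro _ ⟨i', hi', rfl⟩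
      have : i' ≠ i := fun h => hi (h ▸ hi')
      simp [LinearMap.mem_ker, Pi.single_apply, this]
    have := hker h
    simp [LinearMap.mem_ker] at this
  · exact fun h => Submodule.subset_span ⟨i, h, rfl⟩

theorem stmt_17 {k : Type*} [Field k] {d r n : ℕ}
    (S : Fin r → Set (Fin d)) (W : Fin r → Submodule k (Fin d → k))
    (hW : ∀ j, W j = Submodule.span k ((fun i => Pi.single i (1 : k)) '' S j))
    (hn : n = ⨅ i : Fin d, Set.ncard {j : Fin r | (Pi.single i (1 : k) : Fin d → k) ∈ W j})
    (X : Fin r → Fin n → k)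
    (hX : AlgebraicIndependent (⊥ : Subfield k) (fun p : Fin r × Fin n => X p.1 p.2)) :
    Function.Surjective
      (fun (w : ∀ j, W j) => fun (α : Fin n) => ∑ j, X j α • ((w j : Fin d → k))) := by
  classical
  intro v
  have hemb : ∀ i : Fin d, ∃ f : Fin n ↪ Fin r, ∀ β, i ∈ S (f β) := by
    intro i
    have h1 : {j : Fin r | (Pi.single i (1:k) : Fin d → k) ∈ W j} = {j | i ∈ S j} := by
      ext j; simp [hW j, aux_mem]
    have h2 : n ≤ Set.ncard {j : Fin r | (Pi.single i (1:k) : Fin d → k) ∈ W j} :=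
      hn ▸ ciInf_le (OrderBot.bddBelow _) i
    rw [h1, Set.ncard_eq_toFinset_card'] at h2
    obtain ⟨g⟩ : Nonempty (Fin n ↪ {j : Fin r // i ∈ S j}) := by
      rw [Function.Embedding.nonempty_iff_card_le, Fintype.card_fin, Fintype.card_subtype]
      simpa [Set.toFinset_setOf] using h2
    exact ⟨g.trans (Function.Embedding.subtype _), fun β => (g β).2⟩
  choose f hf using hemb
  set A : Fin d → Matrix (Fin n) (Fin n) k := fun i => Matrix.of fun α β => X (f i β) α with hA
  have hAdet : ∀ i, (A i).det ≠ 0 := fun i => aux_det X hX (f i)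
  set c : Fin d → Fin n → k := fun i => (A i)⁻¹.mulVec (fun α => v α i) with hcdef
  have hc : ∀ i, (A i).mulVec (c i) = fun α => v α i := by
    intro i
    rw [hcdef, Matrix.mulVec_mulVec, Matrix.mul_nonsing_inv _ ((hAdet i).isUnit),
      Matrix.one_mulVec]
  set b : Fin r → Fin d → k := fun j i => ∑ β, if f i β = j then c i β else 0 with hbdef
  have hb0 : ∀ j i, i ∉ S j → b j i = 0 := by
    intro j i h
    apply Finset.sum_eq_zero
    intro β _
    rw [if_neg]
    exact fun hfb => h (hfb ▸ hf i β)
  have hmem : ∀ j, b j ∈ W j := by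
    intro j
    rw [hW j]
    have hrepr : b j = ∑ i : Fin d, (b j i) • (Pi.single i (1:k) : Fin d → k) := by
      ext i'
      rw [Finset.sum_apply]
      simp [Pi.single_apply]
    rw [hrepr]
    apply Submodule.sum_mem
    intro i _
    by_cases hi : i ∈ S j
    · exact Submodule.smul_mem _ _ (Submodule.subset_span ⟨i, hi, rfl⟩)
    · rw [hb0 j i hi, zero_smul]; exact Submodule.zero_mem _
  refine ⟨fun j => ⟨b j, hmem j⟩, ?_⟩
  funext α
  funext i
  show (∑ j, X j α • b j) i = v α i
  rw [Finset.sum_apply]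
  have key : ∀ j, (X j α • b j) i = ∑ β, if f i β = j then X (f i β) α * c i β else 0 := by
    intro j
    simp only [Pi.smul_apply, smul_eq_mul, hbdef, Finset.mul_sum]
    congr 1
    ext β
    split_ifs with h
    · rw [h]
    · ring
  calc ∑ j, (X j α • b j) i
      = ∑ j, ∑ β, if f i β = j then X (f i β) α * c i β else 0 :=
        Finset.sum_congr rfl fun j _ => key j
    _ = ∑ β, ∑ j, if f i β = j then X (f i β) α * c i β else 0 := Finset.sum_comm
    _ = ∑ β, X (f i β) α * c i β := by simp
    _ = (A i).mulVec (c i) α := by simp [Matrix.mulVec, dotProduct, hA]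
    _ = v α i := by rw [hc i]
end
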